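/- Let p and t be real numbers, and define the sequence G_n(p,t) by G_0(p,t) = 1 and G_n(p,t) = (p/n) Σ_{k=1}^{n} (−1)^{k+1} B_k(t) G_{n−k}(p,t) for n ≥ 1. Then for every n ≥ 1, (−1)^n G_n(p,t) = Σ_{r=1}^{n} ((−p)^r / r!) Σ_{(k_1,…,k_r)} [B_{k_1}(t) ⋯ B_{k_r}(t)] / (k_1 ⋯ k_r), where the inner sum ranges over all r-tuples (k_1,…,k_r) of positive integers with k_1 + ⋯ + k_r = n. -/

import Mathlib

/-!
With `L(u) = ∑_{k ≥ 1} B_k(t) uᵏ / k`, the recurrence says that `H(u) = ∑ (-1)ⁿ Gₙ uⁿ`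
satisfies `H' = -p L' H`, so `H = exp (-p L) = ∑_r (-p)ʳ Lʳ / r!`, and the coefficient of `uⁿ`
in `Lʳ` is the sum over compositions of `n` into `r` parts (`compositionSum`). No power series
are needed: differentiating `L^(r+1)` gives
`n [uⁿ] L^(r+1) = (r + 1) ∑_m m [uᵐ] L · [u^(n-m)] Lʳ`, which on compositions is the symmetry
of the parts. Hence the candidate coefficients `expCoeff` satisfy the same recurrence as
`(-1)ⁿ Gₙ`, and such a recurrence determines the sequence from its value at `0`.
-/

open Finset

/-- The `k`-th Bernoulli polynomial evaluated at a real number `t`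
(generating function `u e^{tu}/(e^u - 1)`, so `B 1 t = t - 1/2`). -/
noncomputable def bern (k : ℕ) (t : ℝ) : ℝ :=
  Polynomial.aeval t (Polynomial.bernoulli k)

def compositionTuples (r n : ℕ) : Finset (Fin r → ℕ) :=
  (Finset.Nat.antidiagonalTuple r n).filter (fun k => ∀ i, 1 ≤ k i)

lemma mem_compositionTuples {r n : ℕ} {k : Fin r → ℕ} :
    k ∈ compositionTuples r n ↔ ∑ i, k i = n ∧ ∀ i, 1 ≤ k i := by
  simp [compositionTuples, Finset.Nat.mem_antidiagonalTuple]

lemma compositionTuples_eq_empty_of_lt {r n : ℕ} (h : n < r) : compositionTuples r n = ∅ := by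
  refine eq_empty_of_forall_notMem fun k hk => ?_
  obtain ⟨hsum, hpos⟩ := mem_compositionTuples.mp hk
  have : r ≤ n := by
    simpa [← hsum] using Finset.card_nsmul_le_sum univ k 1 fun i _ => hpos i
  omega

lemma comp_perm_mem_compositionTuples {r n : ℕ} {k : Fin r → ℕ} (σ : Equiv.Perm (Fin r)) :
    k ∘ σ ∈ compositionTuples r n ↔ k ∈ compositionTuples r n := by
  simp only [mem_compositionTuples, Function.comp_apply, Equiv.sum_comp σ k]
  exact and_congr_right' ⟨fun h i => by simpa using h (σ.symm i), fun h i => h (σ i)⟩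

lemma sum_compositionTuples_succ {M : Type*} [AddCommMonoid M] (r n : ℕ)
    (φ : (Fin (r + 1) → ℕ) → M) :
    ∑ k ∈ compositionTuples (r + 1) n, φ k =
      ∑ m ∈ Icc 1 n, ∑ v ∈ compositionTuples r (n - m), φ (Fin.cons m v) := by
  rw [← sum_sigma (Icc 1 n) (fun m => compositionTuples r (n - m)) fun x => φ (Fin.cons x.1 x.2)]
  refine sum_nbij' (fun k => ⟨k 0, Fin.tail k⟩) (fun x => Fin.cons x.1 x.2) ?_ ?_
    (fun k _ => Fin.cons_self_tail k) (fun x _ => by simp) (fun k _ => by simp)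
  · intro k hk
    obtain ⟨hsum, hpos⟩ := mem_compositionTuples.mp hk
    rw [Fin.sum_univ_succ] at hsum
    simp only [mem_sigma, mem_Icc, mem_compositionTuples, Fin.tail]
    exact ⟨⟨hpos 0, by omega⟩, by omega, fun i => hpos i.succ⟩
  · rintro ⟨m, v⟩ hx
    simp only [mem_sigma, mem_Icc, mem_compositionTuples] at hx ⊢
    obtain ⟨⟨hm, hmn⟩, hsum, hpos⟩ := hx
    refine ⟨by simp [Fin.sum_univ_succ, hsum]; omega, Fin.cases hm hpos⟩

section CommSemiring

variable {R : Type*} [CommSemiring R]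

def compositionSum (f : ℕ → R) (r n : ℕ) : R :=
  ∑ k ∈ compositionTuples r n, ∏ i, f (k i)

lemma compositionSum_zero_left (f : ℕ → R) (n : ℕ) :
    compositionSum f 0 n = if n = 0 then 1 else 0 := by
  split_ifs with hn
  · subst hn
    simp [compositionSum, compositionTuples]
  · obtain ⟨m, rfl⟩ := Nat.exists_eq_succ_of_ne_zero hn
    simp [compositionSum, compositionTuples, Finset.Nat.antidiagonalTuple_zero_succ]

lemma compositionSum_of_lt (f : ℕ → R) {r n : ℕ} (h : n < r) : compositionSum f r n = 0 := by
  rw [compositionSum, compositionTuples_eq_empty_of_lt h, sum_empty]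

lemma compositionSum_mul_pow (a x : R) (g : ℕ → R) (r n : ℕ) :
    compositionSum (fun m => a * x ^ m * g m) r n = a ^ r * x ^ n * compositionSum g r n := by
  rw [compositionSum, compositionSum, mul_sum]
  refine sum_congr rfl fun k hk => ?_
  rw [prod_mul_distrib, prod_mul_distrib, prod_const, prod_pow_eq_pow_sum,
    (mem_compositionTuples.mp hk).1, card_univ, Fintype.card_fin]

lemma sum_coord_mul_prod_compositionTuples (f : ℕ → R) (r n : ℕ) (j : Fin (r + 1)) :
    ∑ k ∈ compositionTuples (r + 1) n, (k j : R) * ∏ i, f (k i) =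
      ∑ k ∈ compositionTuples (r + 1) n, (k 0 : R) * ∏ i, f (k i) := by
  set σ := Equiv.swap 0 j
  have hσ : ∀ k : Fin (r + 1) → ℕ, (k ∘ σ) ∘ σ = k := fun k => by
    ext i; simp [σ]
  refine sum_nbij' (· ∘ σ) (· ∘ σ) (fun k hk => (comp_perm_mem_compositionTuples σ).mpr hk)
    (fun k hk => (comp_perm_mem_compositionTuples σ).mpr hk) (fun k _ => hσ k) (fun k _ => hσ k)
    fun k _ => ?_
  simp only [Function.comp_apply, σ, Equiv.swap_apply_left]
  rw [Equiv.prod_comp (Equiv.swap 0 j) (fun i => f (k i))]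

theorem natCast_mul_compositionSum_succ (f : ℕ → R) (r n : ℕ) :
    (n : R) * compositionSum f (r + 1) n =
      (r + 1) * ∑ m ∈ Icc 1 n, (m * f m) * compositionSum f r (n - m) := by
  calc (n : R) * compositionSum f (r + 1) n
      = ∑ k ∈ compositionTuples (r + 1) n, ∑ j, (k j : R) * ∏ i, f (k i) := by
        rw [compositionSum, mul_sum]
        refine sum_congr rfl fun k hk => ?_
        rw [← sum_mul, ← (mem_compositionTuples.mp hk).1, Nat.cast_sum]
    _ = (r + 1) * ∑ k ∈ compositionTuples (r + 1) n, (k 0 : R) * ∏ i, f (k i) := by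
        rw [sum_comm, sum_congr rfl fun j _ => sum_coord_mul_prod_compositionTuples f r n j,
          sum_const, card_univ, Fintype.card_fin, nsmul_eq_mul, Nat.cast_succ]
    _ = (r + 1) * ∑ m ∈ Icc 1 n, (m * f m) * compositionSum f r (n - m) := by
        simp only [sum_compositionTuples_succ, compositionSum, mul_sum, Fin.prod_univ_succ,
          Fin.cons_zero, Fin.cons_succ, mul_assoc]

end CommSemiring

section Field

variable {K : Type*} [Field K]

/-- The coefficient of `uⁿ` in `exp (∑_{k ≥ 1} c k uᵏ / k)`. -/
def expCoeff (c : ℕ → K) (n : ℕ) : K :=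
  ∑ r ∈ range (n + 1), compositionSum (fun m => c m / m) r n / r.factorial

lemma expCoeff_eq_sum_range (c : ℕ → K) {n N : ℕ} (h : n < N) :
    expCoeff c n = ∑ r ∈ range N, compositionSum (fun m => c m / m) r n / r.factorial := by
  refine sum_subset (range_subset_range.mpr h) fun r _ hr => ?_
  rw [compositionSum_of_lt _ (by simpa using hr), zero_div]

lemma expCoeff_zero (c : ℕ → K) : expCoeff c 0 = 1 := by
  simp [expCoeff, compositionSum_zero_left]

lemma natCast_mul_expCoeff [CharZero K] (c : ℕ → K) {n : ℕ} (hn : 1 ≤ n) :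
    (n : K) * expCoeff c n = ∑ m ∈ Icc 1 n, c m * expCoeff c (n - m) := by
  have hterm : ∀ s,
      (n : K) * (compositionSum (fun m => c m / m) (s + 1) n / (s + 1).factorial) =
        ∑ m ∈ Icc 1 n, c m * (compositionSum (fun m => c m / m) s (n - m) / s.factorial) := by
    intro s
    rw [mul_div_assoc', natCast_mul_compositionSum_succ, mul_sum, sum_div]
    refine sum_congr rfl fun m hm => ?_
    have hm : (m : K) ≠ 0 := Nat.cast_ne_zero.mpr (by have := (mem_Icc.mp hm).1; omega)
    rw [Nat.factorial_succ, Nat.cast_mul, Nat.cast_succ]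
    field_simp
  calc (n : K) * expCoeff c n
      = ∑ s ∈ range n,
          (n : K) * (compositionSum (fun m => c m / m) (s + 1) n / (s + 1).factorial) := by
        rw [expCoeff, mul_sum, sum_range_succ', compositionSum_zero_left, if_neg (by omega),
          zero_div, mul_zero, add_zero]
    _ = ∑ m ∈ Icc 1 n,
          c m * ∑ s ∈ range n, compositionSum (fun m => c m / m) s (n - m) / s.factorial := by
        simp only [hterm, mul_sum]
        exact sum_comm
    _ = ∑ m ∈ Icc 1 n, c m * expCoeff c (n - m) := by
        refine sum_congr rfl fun m hm => ?_
        rw [expCoeff_eq_sum_range c (N := n) (by have := (mem_Icc.mp hm).1; omega)]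

theorem eq_expCoeff_of_natCast_mul_eq_sum [CharZero K] (c G : ℕ → K) (h0 : G 0 = 1)
    (h : ∀ n : ℕ, 1 ≤ n → (n : K) * G n = ∑ m ∈ Icc 1 n, c m * G (n - m)) (n : ℕ) :
    G n = expCoeff c n := by
  induction n using Nat.strong_induction_on with
  | _ n ih =>
    rcases Nat.eq_zero_or_pos n with rfl | hn
    · rw [h0, expCoeff_zero]
    · have hn' : (n : K) ≠ 0 := Nat.cast_ne_zero.mpr hn.ne'
      refine mul_left_cancel₀ hn' ?_
      rw [h n hn, natCast_mul_expCoeff c hn]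
      exact sum_congr rfl fun m hm => by rw [ih (n - m) (by have := (mem_Icc.mp hm).1; omega)]

lemma expCoeff_eq_sum_Icc (c : ℕ → K) {n : ℕ} (hn : 1 ≤ n) :
    expCoeff c n = ∑ r ∈ Icc 1 n, compositionSum (fun m => c m / m) r n / r.factorial := by
  rw [expCoeff, Nat.range_succ_eq_Icc_zero, ← insert_Icc_add_one_left_eq_Icc n.zero_le, zero_add,
    sum_insert (by simp), compositionSum_zero_left, if_neg (by omega), zero_div, zero_add]

end Field

theorem G_explicit_formula
    (p t : ℝ) (G : ℕ → ℝ) (hG0 : G 0 = 1)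
    (hG : ∀ n : ℕ, 1 ≤ n →
      G n = (p / (n : ℝ)) *
        ∑ k ∈ Finset.Icc 1 n, (-1 : ℝ) ^ (k + 1) * bern k t * G (n - k)) :
    ∀ n : ℕ, 1 ≤ n →
      (-1 : ℝ) ^ n * G n =
        ∑ r ∈ Finset.Icc 1 n, ((-p) ^ r / (Nat.factorial r : ℝ)) *
          ∑ k ∈ (Finset.Nat.antidiagonalTuple r n).filter (fun k => ∀ i, 1 ≤ k i),
            (∏ i, bern (k i) t) / (∏ i, ((k i : ℕ) : ℝ)) := by
  intro n hn
  have hrec : ∀ n : ℕ, 1 ≤ n →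
      (n : ℝ) * G n = ∑ m ∈ Icc 1 n, (-p * (-1) ^ m * bern m t) * G (n - m) := by
    intro n hn
    rw [hG n hn, ← mul_assoc, mul_div_cancel₀ p (Nat.cast_ne_zero.mpr (by omega)), mul_sum]
    exact sum_congr rfl fun m _ => by ring
  have hweight : (fun m : ℕ => -p * (-1) ^ m * bern m t / m) =
      fun m => -p * (-1) ^ m * (bern m t / m) := by
    funext m; ring
  have hsign : ((-1 : ℝ) ^ n) * (-1) ^ n = 1 := by rw [← mul_pow]; norm_num
  rw [eq_expCoeff_of_natCast_mul_eq_sum _ G hG0 hrec n, expCoeff_eq_sum_Icc _ hn, mul_sum]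
  refine sum_congr rfl fun r _ => ?_
  have hsum : compositionSum (fun m => bern m t / m) r n =
      ∑ k ∈ (Finset.Nat.antidiagonalTuple r n).filter (fun k => ∀ i, 1 ≤ k i),
        (∏ i, bern (k i) t) / (∏ i, ((k i : ℕ) : ℝ)) :=
    sum_congr rfl fun k _ => prod_div_distrib _ _
  rw [hweight, compositionSum_mul_pow, ← hsum]
  linear_combination (-p) ^ r / r.factorial * compositionSum (fun m => bern m t / m) r n * hsign
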